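/- arXiv:2511.15587 — 4 statements merged into one kernel-verified Lean document; each statement's English description precedes it below -/
import Mathlib

section
/- Let σ be a unit vector in R^3, ε ∈ {+1,-1}, and let y be a nonzero vector in R^3 with y·σ ≠ -ε|y|. Then, setting ν = R_σ^ε(y) = y/2 + ε(|y|/2)σ, one has ν ≠ 0, |ν·σ| = ε(ν·σ), |y| = |ν|/|ν̂·σ|, and ŷ·σ = ε(2|ν̂·σ|² - 1), where ν̂ = ν/|ν| and ŷ = y/|y|. -/
/-!
Write `ν = R_σ^ε(y)` and `t = ⟪ν, σ⟫ = (⟪y, σ⟫ + ε‖y‖) / 2`. Expanding `‖ν‖²` and using `ε² = 1`,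
`‖σ‖ = 1` gives `‖ν‖² = ‖y‖ · ε t`, while Cauchy–Schwarz and `⟪y, σ⟫ ≠ -ε‖y‖` give `ε t > 0`.
Hence `|⟪ν̂, σ⟫| = ε t / ‖ν‖ = ‖ν‖ / ‖y‖`, from which both identities are algebra.
-/

open RealInnerProductSpace

namespace Bobylev

variable {E : Type*} [NormedAddCommGroup E] [InnerProductSpace ℝ E]

/-- The paper's `R_σ^ε`. -/
noncomputable def bobylevMap (σ : E) (ε : ℝ) (y : E) : E := (1/2 : ℝ) • y + (ε * (‖y‖/2)) • σ

variable {σ y : E} {ε : ℝ}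

theorem ne_zero_of_inner_ne_neg_mul_norm (hyσ : ⟪y, σ⟫ ≠ -ε * ‖y‖) : y ≠ 0 := by
  rintro rfl
  simp at hyσ

theorem inner_bobylevMap (hσ : ‖σ‖ = 1) :
    ⟪bobylevMap σ ε y, σ⟫ = (⟪y, σ⟫ + ε * ‖y‖) / 2 := by
  simp only [bobylevMap, inner_add_left, real_inner_smul_left, real_inner_self_eq_norm_sq, hσ]
  ring

theorem norm_bobylevMap_sq (hσ : ‖σ‖ = 1) (hε : |ε| = 1) :
    ‖bobylevMap σ ε y‖ ^ 2 = ‖y‖ * (ε * ⟪bobylevMap σ ε y, σ⟫) := by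
  have hε2 : ε ^ 2 = 1 := by rw [← sq_abs, hε, one_pow]
  rw [inner_bobylevMap hσ, ← real_inner_self_eq_norm_sq, bobylevMap]
  simp only [inner_add_left, inner_add_right, real_inner_smul_left, real_inner_smul_right,
    real_inner_comm σ y]
  rw [real_inner_self_eq_norm_sq y, real_inner_self_eq_norm_sq σ, hσ]
  linear_combination (-‖y‖ ^ 2 / 4) * hε2

theorem mul_inner_bobylevMap_pos (hσ : ‖σ‖ = 1) (hε : |ε| = 1) (hyσ : ⟪y, σ⟫ ≠ -ε * ‖y‖) :
    0 < ε * ⟪bobylevMap σ ε y, σ⟫ := by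
  have hε2 : ε ^ 2 = 1 := by rw [← sq_abs, hε, one_pow]
  have hcs : |ε * ⟪y, σ⟫| ≤ ‖y‖ := by
    simpa [abs_mul, hε, hσ] using abs_real_inner_le_norm y σ
  have hne : ε * ⟪y, σ⟫ ≠ -‖y‖ := fun h ↦ hyσ <| by
    linear_combination ε * h - ⟪y, σ⟫ * hε2
  have hlt : -‖y‖ < ε * ⟪y, σ⟫ := lt_of_le_of_ne (abs_le.mp hcs).1 hne.symm
  have hexp : ε * ((⟪y, σ⟫ + ε * ‖y‖) / 2) = (ε * ⟪y, σ⟫ + ‖y‖) / 2 := by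
    linear_combination (‖y‖ / 2) * hε2
  rw [inner_bobylevMap hσ, hexp]
  linarith

theorem bobylevMap_ne_zero (hσ : ‖σ‖ = 1) (hε : |ε| = 1) (hyσ : ⟪y, σ⟫ ≠ -ε * ‖y‖) :
    bobylevMap σ ε y ≠ 0 := by
  intro h
  simpa [h] using mul_inner_bobylevMap_pos hσ hε hyσ

theorem abs_inner_bobylevMap (hσ : ‖σ‖ = 1) (hε : |ε| = 1) (hyσ : ⟪y, σ⟫ ≠ -ε * ‖y‖) :
    |⟪bobylevMap σ ε y, σ⟫| = ε * ⟪bobylevMap σ ε y, σ⟫ := by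
  rw [← abs_of_pos (mul_inner_bobylevMap_pos hσ hε hyσ), abs_mul, hε, one_mul]

theorem abs_inner_normalize_bobylevMap (hσ : ‖σ‖ = 1) (hε : |ε| = 1)
    (hyσ : ⟪y, σ⟫ ≠ -ε * ‖y‖) :
    |⟪‖bobylevMap σ ε y‖⁻¹ • bobylevMap σ ε y, σ⟫| = ‖bobylevMap σ ε y‖ / ‖y‖ := by
  have hν : 0 < ‖bobylevMap σ ε y‖ := norm_pos_iff.mpr (bobylevMap_ne_zero hσ hε hyσ)
  have hy : 0 < ‖y‖ := norm_pos_iff.mpr (ne_zero_of_inner_ne_neg_mul_norm hyσ)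
  rw [real_inner_smul_left, abs_mul, abs_inv, abs_norm, abs_inner_bobylevMap hσ hε hyσ,
    inv_mul_eq_div, div_eq_div_iff hν.ne' hy.ne', ← sq, norm_bobylevMap_sq hσ hε, mul_comm]

theorem norm_eq_norm_bobylevMap_div (hσ : ‖σ‖ = 1) (hε : |ε| = 1) (hyσ : ⟪y, σ⟫ ≠ -ε * ‖y‖) :
    ‖y‖ = ‖bobylevMap σ ε y‖ / |⟪‖bobylevMap σ ε y‖⁻¹ • bobylevMap σ ε y, σ⟫| := by
  have hν : ‖bobylevMap σ ε y‖ ≠ 0 := norm_ne_zero_iff.mpr (bobylevMap_ne_zero hσ hε hyσ)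
  rw [abs_inner_normalize_bobylevMap hσ hε hyσ, div_div_cancel₀ hν]

theorem inner_normalize_eq_two_mul_sq_sub_one (hσ : ‖σ‖ = 1) (hε : |ε| = 1)
    (hyσ : ⟪y, σ⟫ ≠ -ε * ‖y‖) :
    ⟪‖y‖⁻¹ • y, σ⟫ =
      ε * (2 * |⟪‖bobylevMap σ ε y‖⁻¹ • bobylevMap σ ε y, σ⟫| ^ 2 - 1) := by
  have hε2 : ε ^ 2 = 1 := by rw [← sq_abs, hε, one_pow]
  have hy : ‖y‖ ≠ 0 := norm_ne_zero_iff.mpr (ne_zero_of_inner_ne_neg_mul_norm hyσ)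
  rw [abs_inner_normalize_bobylevMap hσ hε hyσ, div_pow, norm_bobylevMap_sq hσ hε,
    inner_bobylevMap hσ, real_inner_smul_left]
  field_simp
  linear_combination (-⟪y, σ⟫ - ‖y‖ * ε) * hε2

end Bobylev

open Bobylev in
theorem bobylev_forward_identities_general
    (σ y : EuclideanSpace ℝ (Fin 3)) (hσ : ‖σ‖ = 1)
    (ε : ℝ) (hε : ε = 1 ∨ ε = -1)
    (hyσ : ⟪y, σ⟫ ≠ -ε * ‖y‖) :
    (1/2 : ℝ) • y + (ε * (‖y‖/2)) • σ ≠ 0 ∧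
    |⟪(1/2 : ℝ) • y + (ε * (‖y‖/2)) • σ, σ⟫|
      = ε * ⟪(1/2 : ℝ) • y + (ε * (‖y‖/2)) • σ, σ⟫ ∧
    ‖y‖ = ‖(1/2 : ℝ) • y + (ε * (‖y‖/2)) • σ‖
      / |⟪‖(1/2 : ℝ) • y + (ε * (‖y‖/2)) • σ‖⁻¹ • ((1/2 : ℝ) • y + (ε * (‖y‖/2)) • σ), σ⟫| ∧
    ⟪‖y‖⁻¹ • y, σ⟫
      = ε * (2 * |⟪‖(1/2 : ℝ) • y + (ε * (‖y‖/2)) • σ‖⁻¹ • ((1/2 : ℝ) • y + (ε * (‖y‖/2)) • σ), σ⟫|^2 - 1) := by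
  have hε' : |ε| = 1 := by rcases hε with rfl | rfl <;> simp
  exact ⟨bobylevMap_ne_zero hσ hε' hyσ, abs_inner_bobylevMap hσ hε' hyσ,
    norm_eq_norm_bobylevMap_div hσ hε' hyσ, inner_normalize_eq_two_mul_sq_sub_one hσ hε' hyσ⟩

theorem bobylev_forward_identities
    (σ y : EuclideanSpace ℝ (Fin 3)) (hσ : ‖σ‖ = 1)
    (ε : ℝ) (hε : ε = 1 ∨ ε = -1)
    (hy : y ≠ 0) (hyσ : ⟪y, σ⟫ ≠ -ε * ‖y‖) :
    (1/2 : ℝ) • y + (ε * (‖y‖/2)) • σ ≠ 0 ∧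
    |⟪(1/2 : ℝ) • y + (ε * (‖y‖/2)) • σ, σ⟫|
      = ε * ⟪(1/2 : ℝ) • y + (ε * (‖y‖/2)) • σ, σ⟫ ∧
    ‖y‖ = ‖(1/2 : ℝ) • y + (ε * (‖y‖/2)) • σ‖
      / |⟪‖(1/2 : ℝ) • y + (ε * (‖y‖/2)) • σ‖⁻¹ • ((1/2 : ℝ) • y + (ε * (‖y‖/2)) • σ), σ⟫| ∧
    ⟪‖y‖⁻¹ • y, σ⟫
      = ε * (2 * |⟪‖(1/2 : ℝ) • y + (ε * (‖y‖/2)) • σ‖⁻¹ • ((1/2 : ℝ) • y + (ε * (‖y‖/2)) • σ), σ⟫|^2 - 1) :=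
  bobylev_forward_identities_general σ y hσ ε hε hyσ
end

section
/- Let σ be a unit vector in R^3 and let y be a nonzero vector with y·σ ≠ ±|y|. Then the vectors ν⁺ = R_σ^+(y) and ν⁻ = R_σ^-(y) are both nonzero and satisfy |ν̂⁺·σ|² + |ν̂⁻·σ|² = 1, where ν̂^± = ν^±/|ν^±|. -/
open RealInnerProductSpace

noncomputable section

theorem bobylev_angles_pythagorean
    (σ y : EuclideanSpace ℝ (Fin 3)) (hσ : ‖σ‖ = 1)
    (hy : y ≠ 0) (hyσp : ⟪y, σ⟫ ≠ ‖y‖) (hyσm : ⟪y, σ⟫ ≠ -‖y‖) :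
    (1/2 : ℝ) • y + (‖y‖/2) • σ ≠ 0 ∧
    (1/2 : ℝ) • y - (‖y‖/2) • σ ≠ 0 ∧
    |⟪‖(1/2 : ℝ) • y + (‖y‖/2) • σ‖⁻¹ • ((1/2 : ℝ) • y + (‖y‖/2) • σ), σ⟫|^2
      + |⟪‖(1/2 : ℝ) • y - (‖y‖/2) • σ‖⁻¹ • ((1/2 : ℝ) • y - (‖y‖/2) • σ), σ⟫|^2 = 1 := by
  set a := ⟪y, σ⟫ with ha
  set n := ‖y‖ with hn'
  have hn : (0:ℝ) < n := norm_pos_iff.mpr hy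
  have hca : |a| ≤ n := by
    have h := abs_real_inner_le_norm y σ
    simpa [hσ, ← ha, ← hn'] using h
  have h1 : 0 < n + a := by
    rcases abs_le.mp hca with ⟨h, _⟩
    rcases lt_or_eq_of_le h with h | h
    · linarith
    · exact absurd h.symm hyσm
  have h2 : 0 < n - a := by
    rcases abs_le.mp hca with ⟨_, h⟩
    rcases lt_or_eq_of_le h with h | h
    · linarith
    · exact absurd h hyσp
  have hσσ : ⟪σ, σ⟫ = (1:ℝ) := by
    rw [real_inner_self_eq_norm_sq, hσ]; norm_num
  have hu2 : ‖(1/2:ℝ) • y + (n/2) • σ‖^2 = n * (n + a) / 2 := by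
    rw [@norm_add_sq_real, norm_smul, norm_smul, real_inner_smul_left,
      real_inner_smul_right]
    simp only [Real.norm_eq_abs, hσ, ← ha, ← hn']
    rw [abs_of_pos (by norm_num : (0:ℝ) < 1/2), abs_of_pos (by positivity : (0:ℝ) < n/2)]
    ring
  have hv2 : ‖(1/2:ℝ) • y - (n/2) • σ‖^2 = n * (n - a) / 2 := by
    rw [@norm_sub_sq_real, norm_smul, norm_smul, real_inner_smul_left,
      real_inner_smul_right]
    simp only [Real.norm_eq_abs, hσ, ← ha, ← hn']
    rw [abs_of_pos (by norm_num : (0:ℝ) < 1/2), abs_of_pos (by positivity : (0:ℝ) < n/2)]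
    ring
  have hu0 : (1/2:ℝ) • y + (n/2) • σ ≠ 0 := by
    intro h
    rw [h, norm_zero] at hu2
    nlinarith
  have hv0 : (1/2:ℝ) • y - (n/2) • σ ≠ 0 := by
    intro h
    rw [h, norm_zero] at hv2
    nlinarith
  have hun : ‖(1/2:ℝ) • y + (n/2) • σ‖ ≠ 0 := norm_ne_zero_iff.mpr hu0
  have hvn : ‖(1/2:ℝ) • y - (n/2) • σ‖ ≠ 0 := norm_ne_zero_iff.mpr hv0
  have hiu : ⟪(1/2:ℝ) • y + (n/2) • σ, σ⟫ = (a + n)/2 := by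
    rw [inner_add_left, real_inner_smul_left, real_inner_smul_left, hσσ, ← ha]
    ring
  have hiv : ⟪(1/2:ℝ) • y - (n/2) • σ, σ⟫ = (a - n)/2 := by
    rw [inner_sub_left, real_inner_smul_left, real_inner_smul_left, hσσ, ← ha]
    ring
  refine ⟨hu0, hv0, ?_⟩
  rw [real_inner_smul_left, real_inner_smul_left, hiu, hiv, sq_abs, sq_abs,
    mul_pow, mul_pow, inv_pow, inv_pow, hu2, hv2]
  field_simp
  ring
end
end

section
/- Let k, k₁ ∈ R^3 and σ a unit vector, with K = (k+k₁)/2, w = k-k₁, k* = K - (|w|/2)σ, k₁* = K + (|w|/2)σ. Then ⟨k*⟩² ≥ ⟨k₁*⟩²(1 - λ |k̂₁*·σ|), where λ = |k₁*|²/⟨k₁*⟩², ⟨v⟩ = (1+|v|²)^{1/2}, and k̂₁*·σ is interpreted as 0 when k₁* = 0. -/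
open RealInnerProductSpace

noncomputable section

theorem kstar_lower_bound_by_k1star
    (k k₁ σ : EuclideanSpace ℝ (Fin 3)) (hσ : ‖σ‖ = 1) :
    let K := (1/2 : ℝ) • (k + k₁)
    let w := k - k₁
    let kstar := K - (‖w‖/2) • σ
    let k₁star := K + (‖w‖/2) • σ
    1 + ‖kstar‖^2 ≥
      (1 + ‖k₁star‖^2) * (1 - (‖k₁star‖^2/(1 + ‖k₁star‖^2)) * |⟪‖k₁star‖⁻¹ • k₁star, σ⟫|) := by
  intro K w kstar k₁star
  have hks : kstar = k₁star - ‖w‖ • σ := by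
    show K - (‖w‖/2) • σ = K + (‖w‖/2) • σ - ‖w‖ • σ
    module
  have hnorm : ‖kstar‖^2 = ‖k₁star‖^2 - 2*‖w‖*⟪k₁star, σ⟫ + ‖w‖^2 := by
    rw [hks, norm_sub_sq_real, real_inner_smul_right, norm_smul, hσ]
    simp [abs_of_nonneg (norm_nonneg w)]
    ring
  by_cases h : k₁star = 0
  · simp only [h, norm_zero, inner_zero_left, smul_zero, abs_zero, mul_zero, sub_zero, mul_one]
    nlinarith [sq_nonneg ‖kstar‖]
  · have ha : (0:ℝ) < ‖k₁star‖ := norm_pos_iff.mpr h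
    set a := ‖k₁star‖
    set t := ⟪k₁star, σ⟫ with ht
    have hin : ⟪(a⁻¹ : ℝ) • k₁star, σ⟫ = a⁻¹ * t := real_inner_smul_left _ _ _
    rw [hin, abs_mul, abs_of_nonneg (by positivity : (0:ℝ) ≤ a⁻¹)]
    have hC : |t| ≤ a := by
      have := abs_real_inner_le_norm k₁star σ
      rwa [hσ, mul_one] at this
    have habs : t ≤ |t| ∧ -t ≤ |t| := ⟨le_abs_self t, neg_le_abs t⟩
    have h1 : (0:ℝ) < 1 + a^2 := by positivity
    have key : (1 + a^2) * (1 - a^2/(1+a^2) * (a⁻¹ * |t|)) = 1 + a^2 - a * |t| := by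
      field_simp
    rw [key]
    have hw : (0:ℝ) ≤ ‖w‖ := norm_nonneg w
    nlinarith [sq_nonneg (‖w‖ - |t|), habs.1, habs.2, hC, abs_nonneg t,
      mul_nonneg hw (abs_nonneg t)]
end
end

section
/- Let k ∈ R^3, σ a unit vector, and ν ∈ R^3. If k₁ := (k - 2ν) + (|ν|/(ν̂·σ))σ where ν·σ > 0, then ⟨k₁⟩² > (⟨k⟩²/9)(1 - λ_k |(k-2ν)^·σ|), where λ_k = |k|²/⟨k⟩², ⟨v⟩ = (1+|v|²)^{1/2}, and (k-2ν)^·σ is interpreted as 0 if k = 2ν. -/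
open RealInnerProductSpace

noncomputable section

theorem k1_lower_bound
    (k σ ν : EuclideanSpace ℝ (Fin 3)) (hσ : ‖σ‖ = 1)
    (hνσ : ⟪ν, σ⟫ > 0) :
    let k₁ := (k - (2 : ℝ) • ν) + (‖ν‖ / ⟪‖ν‖⁻¹ • ν, σ⟫) • σ
    1 + ‖k₁‖^2 >
      ((1 + ‖k‖^2)/9) * (1 - (‖k‖^2/(1 + ‖k‖^2)) * |⟪‖k - (2 : ℝ) • ν‖⁻¹ • (k - (2 : ℝ) • ν), σ⟫|) := by
  intro k₁
  set w := k - (2 : ℝ) • ν with hw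
  have hν : ν ≠ 0 := by
    intro h
    simp [h] at hνσ
  have hnν : (0:ℝ) < ‖ν‖ := norm_pos_iff.mpr hν
  set d := ⟪‖ν‖⁻¹ • ν, σ⟫ with hdref
  have hdval : d = ‖ν‖⁻¹ * ⟪ν, σ⟫ := real_inner_smul_left _ _ _
  have hd0 : 0 < d := by
    rw [hdval]; positivity
  have hd1 : d ≤ 1 := by
    calc d ≤ ‖‖ν‖⁻¹ • ν‖ * ‖σ‖ := real_inner_le_norm _ _
    _ = 1 := by
      rw [norm_smul, hσ]
      simp [abs_of_pos (inv_pos.mpr hnν), inv_mul_cancel₀ hnν.ne']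
  set a := ‖ν‖ / d with haref
  have ha : ‖ν‖ ≤ a := by
    rw [haref]
    calc ‖ν‖ = ‖ν‖ / 1 := by ring
    _ ≤ ‖ν‖ / d := by
      apply div_le_div_of_nonneg_left hnν.le hd0 hd1
  have ha0 : 0 < a := lt_of_lt_of_le hnν ha
  set s := ⟪‖w‖⁻¹ • w, σ⟫ with hsref
  have hsw : ⟪w, σ⟫ = ‖w‖ * s := by
    by_cases hw0 : w = 0
    · simp [hsref, hw0]
    · have h2 : s = ‖w‖⁻¹ * ⟪w, σ⟫ := real_inner_smul_left _ _ _
      rw [h2, mul_inv_cancel_left₀ (norm_ne_zero_iff.mpr hw0)]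
  have ht1 : |s| ≤ 1 := by
    by_cases hw0 : w = 0
    · simp [hsref, hw0]
    · calc |s| ≤ ‖‖w‖⁻¹ • w‖ * ‖σ‖ := abs_real_inner_le_norm _ _
      _ = 1 := by
        have hnw : (0:ℝ) < ‖w‖ := norm_pos_iff.mpr hw0
        rw [norm_smul, hσ]
        simp [abs_of_pos (inv_pos.mpr hnw), inv_mul_cancel₀ hnw.ne']
  have hst : -|s| ≤ s := neg_abs_le s
  have hk1 : ‖k₁‖^2 = ‖w‖^2 + 2*a*(‖w‖*s) + a^2 := by
    have h := @norm_add_sq_real (EuclideanSpace ℝ (Fin 3)) _ _ w (a • σ)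
    rw [real_inner_smul_right, norm_smul, hσ, hsw, Real.norm_eq_abs, abs_of_pos ha0] at h
    have hk1e : k₁ = w + a • σ := rfl
    rw [hk1e, h]; ring
  -- key lower bound: ‖k₁‖² ≥ (‖w‖² + ‖ν‖²)(1 - |s|)
  have key : (‖w‖^2 + ‖ν‖^2) * (1 - |s|) ≤ ‖k₁‖^2 := by
    rw [hk1]
    nlinarith [sq_nonneg (a - ‖w‖), sq_nonneg (a + ‖w‖), mul_nonneg ha0.le (norm_nonneg w),
      mul_le_mul_of_nonneg_left hst (mul_nonneg ha0.le (norm_nonneg w)),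
      sq_nonneg ‖ν‖, mul_le_mul_of_nonneg_right (mul_self_le_mul_self hnν.le ha)
        (sub_nonneg.mpr ht1), abs_nonneg s]
  -- ‖k‖² ≤ 9 (‖w‖² + ‖ν‖²)
  have hk9 : ‖k‖^2 ≤ 9 * (‖w‖^2 + ‖ν‖^2) := by
    have hkw : ‖k‖ ≤ ‖w‖ + 2 * ‖ν‖ := by
      have : k = w + (2:ℝ) • ν := by rw [hw]; abel
      rw [this]
      calc ‖w + (2:ℝ) • ν‖ ≤ ‖w‖ + ‖(2:ℝ) • ν‖ := norm_add_le _ _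
      _ = ‖w‖ + 2 * ‖ν‖ := by rw [norm_smul]; norm_num
    nlinarith [norm_nonneg k, norm_nonneg w, norm_nonneg ν, sq_nonneg (‖w‖ - ‖ν‖)]
  -- conclude
  have hK : (0:ℝ) < 1 + ‖k‖^2 := by positivity
  have hfin : (‖k‖^2 / 9) * (1 - |s|) ≤ ‖k₁‖^2 := by
    refine le_trans ?_ key
    apply mul_le_mul_of_nonneg_right _ (sub_nonneg.mpr ht1)
    linarith
  rw [show ((1 + ‖k‖^2)/9) * (1 - (‖k‖^2/(1 + ‖k‖^2)) * |s|)
      = (1 + ‖k‖^2)/9 - (‖k‖^2/9) * |s| from by field_simp]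
  nlinarith [abs_nonneg s, sq_nonneg ‖k‖]
end
end
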